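/- Let α be an irrational real number with 0 < α < 1/2, and let ψ ∈ ⟨ψ₁,ψ₃⟩ be a morphism that fixes the characteristic word c_α. Let ψ̃ be the time reversal of ψ, i.e., the morphism with ψ̃(0) = reverse(ψ(0)) and ψ̃(1) = reverse(ψ(1)). Then the morphism ψ̃² = ψ̃∘ψ̃ fixes both Sturmian words s_{α,1−α} and s'_{α,1−α}. -/

import Mathlib

/-- A morphism of the free monoid `{0,1}*`, determined by the images of the two
letters (`false` encodes the letter 0, `true` encodes the letter 1). -/
abbrev Morph := Bool → List Bool

/-- The identity morphism. -/
def idm : Morph := fun a => [a]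

/-- Composition of morphisms: `(M σ τ)(a) = σ(τ(a))`. -/
def M (σ τ : Morph) : Morph := fun a => (τ a).flatMap σ

/-- `compAll g [i₁, …, iₙ] = g i₁ ∘ g i₂ ∘ ⋯ ∘ g iₙ` (the identity for `n = 0`). -/
def compAll (g : Bool → Morph) (l : List Bool) : Morph :=
  l.foldr (fun i acc => M (g i) acc) idm

/-- Iterated composition of a morphism with itself. -/
def mpow (σ : Morph) : ℕ → Morph
  | 0 => idm
  | k + 1 => M σ (mpow σ k)

/-- The length-`n` prefix of an infinite word. -/
def wpref (w : ℕ → Bool) (n : ℕ) : List Bool := (List.range n).map w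

/-- `σ` fixes the infinite word `w`: for every `n`, the finite word
`σ(w(0))σ(w(1))⋯σ(w(n-1))` is a prefix of `w`. -/
def Fixes (σ : Morph) (w : ℕ → Bool) : Prop :=
  ∀ n : ℕ, (wpref w n).flatMap σ = wpref w ((wpref w n).flatMap σ).length

/-- The integer value `⌊(n+1)α + ρ⌋ - ⌊nα + ρ⌋` of the Sturmian word `s_{α,ρ}`. -/
noncomputable def sfl (α ρ : ℝ) (n : ℕ) : ℤ :=
  ⌊((n : ℝ) + 1) * α + ρ⌋ - ⌊(n : ℝ) * α + ρ⌋

/-- The integer value `⌈(n+1)α + ρ⌉ - ⌈nα + ρ⌉` of the Sturmian word `s'_{α,ρ}`. -/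
noncomputable def scl (α ρ : ℝ) (n : ℕ) : ℤ :=
  ⌈((n : ℝ) + 1) * α + ρ⌉ - ⌈(n : ℝ) * α + ρ⌉

/-- The Sturmian word `s_{α,ρ}` as an infinite binary word. -/
noncomputable def sw (α ρ : ℝ) : ℕ → Bool := fun n => decide (sfl α ρ n = 1)

/-- The Sturmian word `s'_{α,ρ}` as an infinite binary word. -/
noncomputable def sw' (α ρ : ℝ) : ℕ → Bool := fun n => decide (scl α ρ n = 1)

/-- The characteristic word `c_α = s_{α,α}`. -/
noncomputable def cw (α : ℝ) : ℕ → Bool := sw α α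

/-- `ψ₁ : 0 → 01, 1 → 0` (the Fibonacci morphism, `φ₁`). -/
def psi1 : Morph := fun a => match a with | false => [false, true] | true => [false]

/-- `ψ₃ : 0 → 0, 1 → 01` (the morphism `G`, i.e. `φ₀`). -/
def psi3 : Morph := fun a => match a with | false => [false] | true => [false, true]

/-- `ψ₄ : 0 → 0, 1 → 10`. -/
def psi4 : Morph := fun a => match a with | false => [false] | true => [true, false]

/-- `ψ₇ : 0 → 10, 1 → 1`. -/
def psi7 : Morph := fun a => match a with | false => [true, false] | true => [true]

/-- `ψ₈ : 0 → 01, 1 → 1`. -/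
def psi8 : Morph := fun a => match a with | false => [false, true] | true => [true]

/-- Time reversal of a morphism. -/
def trev (σ : Morph) : Morph := fun a => (σ a).reverse

/-- The exchange morphism `E : 0 → 1, 1 → 0`. -/
def Em : Morph := fun a => [!a]

/-- Generators `φ₀, φ₁` indexed by a bit: `false ↦ φ₀ (= ψ₃)`, `true ↦ φ₁ (= ψ₁)`. -/
def phiGen : Bool → Morph := fun b => match b with | false => psi3 | true => psi1

/-- Generators of `⟨ψ₁, ψ₃⟩`: `false` encodes the index 1 (`ψ₁`),
`true` encodes the index 3 (`ψ₃`). -/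
def g13 : Bool → Morph := fun b => match b with | false => psi1 | true => psi3

/-- Generators of `⟨ψ₃, ψ₈⟩`: `false ↦ ψ₃`, `true ↦ ψ₈`. -/
def g38 : Bool → Morph := fun b => match b with | false => psi3 | true => psi8

/-- Generators of `⟨ψ₄, ψ₇⟩`: `false ↦ ψ₄`, `true ↦ ψ₇`. -/
def g47 : Bool → Morph := fun b => match b with | false => psi4 | true => psi7

/-- The Kepler matrices `K₀ = [[1,0],[1,1]]` and `K₁ = [[0,1],[1,1]]`. -/
def K : Bool → Matrix (Fin 2) (Fin 2) ℕ
  | false => !![1, 0; 1, 1]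
  | true => !![0, 1; 1, 1]

/-!
Every `ψ ∈ ⟨ψ₁, ψ₃⟩` is conjugate to its time reversal: there is a word `z` with
`ψ(a) z = z ψ̃(a)`, and `ψ̃` maps `01, 10` to `01 z, 10 z`, possibly swapped. Both properties
hold for `ψ₁, ψ₃` with `z = 0` and survive composition, the swaps composing by `xor`; so for
`ψ²` the swap cancels and `ψ̃²(ab) = ab Z` for `ab ∈ {01, 10}`, where `Z` conjugates `ψ²` to `ψ̃²`.
As `s_{α,1-α} = 10 c_α` and `s'_{α,1-α} = 01 c_α`, this gives
`ψ̃²(ab c_α) = ab Z ψ̃²(c_α) = ab ψ²(c_α) = ab c_α`, the middle step being the conjugacy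
passed to the limit.
-/

-- Infinite words `ℕ → Bool` are definitionally `Stream' Bool`, whose API we use.
open Stream' (take)

theorem wpref_eq_take (w : Stream' Bool) (n : ℕ) : wpref w n = take n w := by
  induction n with
  | zero => rfl
  | succ n ih =>
    rw [Stream'.take_succ', ← ih]
    exact congrArg (List.map w) List.range_succ |>.trans List.map_append

theorem eq_take_length_of_prefix {α : Type*} {v : List α} {w : Stream' α} {m : ℕ}
    (h : v <+: take m w) : v = take v.length w := by
  have hv := List.prefix_iff_eq_take.1 h
  rwa [Stream'.take_take, min_eq_right (by simpa using h.length_le)] at hv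

theorem fixes_iff_prefix {σ : Morph} {w : Stream' Bool} :
    Fixes σ w ↔ ∀ n, ∃ m, (take n w).flatMap σ <+: take m w := by
  simp only [Fixes, wpref_eq_take]
  exact ⟨fun h n => ⟨((take n w).flatMap σ).length, by rw [← h n]⟩,
    fun h n => eq_take_length_of_prefix (h n).choose_spec⟩

theorem flatMap_M (σ τ : Morph) (u : List Bool) :
    u.flatMap (M σ τ) = (u.flatMap τ).flatMap σ :=
  (List.flatMap_assoc ..).symm

theorem Fixes.comp {σ τ : Morph} {w : ℕ → Bool} (hσ : Fixes σ w) (hτ : Fixes τ w) :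
    Fixes (M σ τ) w := fun n => by
  rw [flatMap_M, hτ n]
  exact hσ _

theorem trev_M (σ τ : Morph) : trev (M σ τ) = M (trev σ) (trev τ) := by
  funext a
  simp only [trev, M, List.reverse_flatMap]
  rfl

theorem length_flatMap_trev (σ : Morph) (u : List Bool) :
    (u.flatMap (trev σ)).length = (u.flatMap σ).length := by
  simp [List.length_flatMap, trev]

theorem length_le_length_flatMap {σ : Morph} (hσ : ∀ a, σ a ≠ []) (u : List Bool) :
    u.length ≤ (u.flatMap σ).length := by
  induction u with
  | nil => simp
  | cons a u ih =>
    have := List.length_pos_iff.2 (hσ a)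
    simp only [List.flatMap_cons, List.length_append, List.length_cons]
    omega

theorem M_ne_nil {σ τ : Morph} (hσ : ∀ a, σ a ≠ []) (hτ : ∀ a, τ a ≠ []) (a : Bool) :
    M σ τ a ≠ [] := by
  rw [← List.length_pos_iff]
  exact (List.length_pos_iff.2 (hτ a)).trans_le (length_le_length_flatMap hσ (τ a))

theorem compAll_ne_nil {g : Bool → Morph} (hg : ∀ i a, g i a ≠ []) (l : List Bool) (a : Bool) :
    compAll g l a ≠ [] := by
  induction l generalizing a with
  | nil => exact List.cons_ne_nil a []
  | cons i l ih => exact M_ne_nil (hg i) ih a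

theorem flatMap_append_of_conj {σ : Morph} {z : List Bool}
    (h : ∀ a, σ a ++ z = z ++ trev σ a) (u : List Bool) :
    u.flatMap σ ++ z = z ++ u.flatMap (trev σ) := by
  induction u with
  | nil => simp
  | cons a u ih =>
    rw [List.flatMap_cons, List.flatMap_cons, List.append_assoc, ih, ← List.append_assoc, h,
      List.append_assoc]

theorem exists_prefix_append_flatMap_trev {σ : Morph} {c : Stream' Bool} {Z : List Bool}
    (hfix : Fixes σ c) (hne : ∀ a, σ a ≠ []) (hZ : ∀ a, σ a ++ Z = Z ++ trev σ a) (n : ℕ) :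
    ∃ m, Z ++ (take n c).flatMap (trev σ) <+: take m c := by
  -- `Z σ̃(c[0,n))` is a prefix of `Z σ̃(c[0,n+|Z|)) = σ(c[0,n+|Z|)) Z`, and no longer than
  -- `σ(c[0,n+|Z|))` because the `|Z|` extra letters have nonempty images.
  obtain ⟨m, hm⟩ := fixes_iff_prefix.1 hfix (n + Z.length)
  refine ⟨m, List.IsPrefix.trans ?_ hm⟩
  have hpre : Z ++ (take n c).flatMap (trev σ) <+: (take (n + Z.length) c).flatMap σ ++ Z := by
    rw [flatMap_append_of_conj hZ]
    exact (List.prefix_append_right_inj Z).2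
      ((Stream'.take_prefix_take_left _ _ _ (by omega)).flatMap _)
  refine List.prefix_of_prefix_length_le hpre (List.prefix_append _ _) ?_
  have hrest := length_le_length_flatMap hne (take Z.length (Stream'.drop n c))
  rw [Stream'.length_take] at hrest
  rw [Stream'.take_add, List.flatMap_append, List.length_append, List.length_append,
    length_flatMap_trev]
  omega

theorem Fixes.trev_appendStream {σ : Morph} {c : Stream' Bool} {Z u : List Bool}
    (hfix : Fixes σ c) (hne : ∀ a, σ a ≠ []) (hZ : ∀ a, σ a ++ Z = Z ++ trev σ a)
    (hu : u.flatMap (trev σ) = u ++ Z) : Fixes (trev σ) (u ++ₛ c) := by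
  refine fixes_iff_prefix.2 fun n => ?_
  obtain ⟨m, hm⟩ := exists_prefix_append_flatMap_trev hfix hne hZ n
  refine ⟨u.length + m, ?_⟩
  have hn :
      (take n (u ++ₛ c)).flatMap (trev σ) <+: u ++ (Z ++ (take n c).flatMap (trev σ)) := by
    rw [← List.append_assoc, ← hu, ← List.flatMap_append, Stream'.append_take]
    exact (Stream'.take_prefix_take_left _ _ _ (by omega)).flatMap _
  rw [← Stream'.append_take]
  exact hn.trans ((List.prefix_append_right_inj u).2 hm)

structure ReversalConj (σ : Morph) (z : List Bool) (b : Bool) : Prop where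
  conj : ∀ a, σ a ++ z = z ++ trev σ a
  pairs : ∀ a, [a, !a].flatMap (trev σ) = [a ^^ b, !(a ^^ b)] ++ z

theorem reversalConj_idm : ReversalConj idm [] false :=
  ⟨fun _ => rfl, fun a => by cases a <;> rfl⟩

theorem reversalConj_g13 (i : Bool) : ReversalConj (g13 i) [false] (!i) := by
  cases i <;> exact ⟨by decide, by decide⟩

theorem ReversalConj.comp {σ τ : Morph} {z₁ z₂ : List Bool} {b₁ b₂ : Bool}
    (hσ : ReversalConj σ z₁ b₁) (hτ : ReversalConj τ z₂ b₂) :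
    ReversalConj (M σ τ) (z₁ ++ z₂.flatMap (trev σ)) (b₂ ^^ b₁) where
  conj a := by
    rw [trev_M]
    calc (τ a).flatMap σ ++ (z₁ ++ z₂.flatMap (trev σ))
        = z₁ ++ (τ a ++ z₂).flatMap (trev σ) := by
          rw [← List.append_assoc, flatMap_append_of_conj hσ.conj, List.flatMap_append,
            List.append_assoc]
      _ = z₁ ++ (z₂ ++ trev τ a).flatMap (trev σ) := by rw [hτ.conj]
      _ = (z₁ ++ z₂.flatMap (trev σ)) ++ (trev τ a).flatMap (trev σ) := by
          rw [List.flatMap_append, List.append_assoc]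
  pairs a := by
    rw [trev_M, flatMap_M, hτ.pairs, List.flatMap_append, hσ.pairs, Bool.xor_assoc,
      List.append_assoc]

theorem exists_reversalConj_compAll_g13 (l : List Bool) :
    ∃ z b, ReversalConj (compAll g13 l) z b := by
  induction l with
  | nil => exact ⟨_, _, reversalConj_idm⟩
  | cons i l ih =>
    obtain ⟨z, b, h⟩ := ih
    exact ⟨_, _, (reversalConj_g13 i).comp h⟩

theorem g13_ne_nil (i a : Bool) : g13 i a ≠ [] := by
  cases i <;> cases a <;> decide

theorem Irrational.ceil_eq_floor_add_one {x : ℝ} (hx : Irrational x) : ⌈x⌉ = ⌊x⌋ + 1 :=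
  (Int.ceil_eq_floor_add_one_iff_notMem x).2 fun ⟨m, hm⟩ => hx.ne_int m hm.symm

theorem scl_eq_sfl {α ρ : ℝ} {n : ℕ} (h₁ : Irrational ((n + 1) * α + ρ))
    (h₀ : Irrational (n * α + ρ)) : scl α ρ n = sfl α ρ n := by
  rw [scl, sfl, h₁.ceil_eq_floor_add_one, h₀.ceil_eq_floor_add_one]
  ring

theorem sfl_one_sub_add_two (α : ℝ) (n : ℕ) : sfl α (1 - α) (n + 2) = sfl α α n := by
  have e₁ : ((n + 2 : ℕ) + 1 : ℝ) * α + (1 - α) = ((n + 1) * α + α) + 1 := by push_cast; ring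
  have e₀ : ((n + 2 : ℕ) : ℝ) * α + (1 - α) = (n * α + α) + 1 := by push_cast; ring
  rw [sfl, sfl, e₁, e₀, Int.floor_add_one, Int.floor_add_one]
  ring

theorem sw_one_sub {α : ℝ} (h0 : 0 < α) (h1 : α < 1) :
    sw α (1 - α) = [true, false] ++ₛ cw α := by
  funext n
  match n with
  | 0 =>
    have : sfl α (1 - α) 0 = 1 := by
      simp [sfl, h0, h1.le]
    show decide (sfl α (1 - α) 0 = 1) = true
    rw [this]
    rfl
  | 1 =>
    have : sfl α (1 - α) 1 = 0 := by
      rw [sfl, show ((1 : ℕ) + 1 : ℝ) * α + (1 - α) = α + 1 by push_cast; ring]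
      simp [Int.floor_eq_zero_iff, h0.le, h1]
    show decide (sfl α (1 - α) 1 = 1) = false
    rw [this]
    rfl
  | n + 2 =>
    show decide (sfl α (1 - α) (n + 2) = 1) = decide (sfl α α n = 1)
    rw [sfl_one_sub_add_two]

theorem sw'_one_sub {α : ℝ} (hα : Irrational α) (h0 : 0 < α) (h1 : α < 1) :
    sw' α (1 - α) = [false, true] ++ₛ cw α := by
  have hirr : ∀ k : ℕ, k ≠ 0 → Irrational ((k + 1 : ℝ) * α + (1 - α)) := fun k hk => by
    convert (hα.natCast_mul hk).add_natCast 1 using 1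
    push_cast; ring
  funext n
  match n with
  | 0 =>
    have : scl α (1 - α) 0 = 0 := by
      have : ⌈1 - α⌉ = 1 := Int.ceil_eq_iff.2 ⟨by push_cast; linarith, by push_cast; linarith⟩
      simp [scl, this]
    show decide (scl α (1 - α) 0 = 1) = false
    rw [this]
    rfl
  | 1 =>
    have : scl α (1 - α) 1 = 1 := by
      have : ⌈α⌉ = 1 := Int.ceil_eq_iff.2 ⟨by push_cast; linarith, by push_cast; linarith⟩
      rw [scl, show ((1 : ℕ) + 1 : ℝ) * α + (1 - α) = α + 1 by push_cast; ring]
      simp [this]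
    show decide (scl α (1 - α) 1 = 1) = true
    rw [this]
    rfl
  | n + 2 =>
    have h₀ : Irrational (((n + 2 : ℕ) : ℝ) * α + (1 - α)) := by
      convert hirr (n + 1) (by omega) using 3
      push_cast; ring
    show decide (scl α (1 - α) (n + 2) = 1) = decide (sfl α α n = 1)
    rw [scl_eq_sfl (hirr (n + 2) (by omega)) h₀, sfl_one_sub_add_two]

/-- If `ψ ∈ ⟨ψ₁, ψ₃⟩` fixes the characteristic word `c_α`
(`α` irrational, `0 < α < 1/2`), then `ψ̃² = ψ̃ ∘ ψ̃`, where `ψ̃` is the time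
reversal of `ψ`, fixes both `s_{α,1-α}` and `s'_{α,1-α}`. -/
theorem time_reversal_sq_fixes (α : ℝ) (hirr : Irrational α) (h0 : 0 < α) (h2 : α < 1 / 2)
    (ψ : Morph) (hmem : ∃ l : List Bool, ψ = compAll g13 l) (hfix : Fixes ψ (cw α)) :
    Fixes (M (trev ψ) (trev ψ)) (sw α (1 - α)) ∧
    Fixes (M (trev ψ) (trev ψ)) (sw' α (1 - α)) := by
  obtain ⟨l, rfl⟩ := hmem
  set ψ := compAll g13 l
  obtain ⟨z, b, hψ⟩ := exists_reversalConj_compAll_g13 l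
  have hψne : ∀ a, ψ a ≠ [] := compAll_ne_nil g13_ne_nil l
  have hsq := hψ.comp hψ
  rw [Bool.xor_self] at hsq
  have hfixes : ∀ a, Fixes (trev (M ψ ψ)) ([a, !a] ++ₛ cw α) := fun a =>
    (hfix.comp hfix).trev_appendStream (M_ne_nil hψne hψne) hsq.conj
      (by rw [hsq.pairs, Bool.xor_false])
  rw [← trev_M, sw_one_sub h0 (by linarith), sw'_one_sub hirr h0 (by linarith)]
  exact ⟨hfixes true, hfixes false⟩
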